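/- Let τ > 0, τ ≠ 1, v > 0, μ ∈ (0,2], and ω > v²/(τ²+1)². Then the mass M(ω) = ((μ+1)^{1/μ}/μ) ω^{1/μ−1/2} (∫_{−1}^{1} (1−t²)^{1/μ−1} dt − φ(ω)), where φ(ω) = ∫_{T̃₋(ω)}^{T̃₊(ω)} (1−t²)^{1/μ−1} dt, is a non-decreasing function of ω (strictly increasing for μ < 2). -/
import Mathlib


open Set Real intervalIntegral

noncomputable section

def Aq (τ v μ ω : ℝ) : ℝ :=
  v ^ 2 / ω * τ ^ (2 * μ) + (τ ^ (2 * μ + 4) - 1) * (τ ^ (2 * μ) - 1)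

def Ttm (τ v μ ω : ℝ) : ℝ :=
  1 / (τ ^ (2 * μ + 4) - 1) * (v / Real.sqrt ω - τ ^ 2 * Real.sqrt (Aq τ v μ ω))

def Ttp (τ v μ ω : ℝ) : ℝ :=
  1 / (τ ^ (2 * μ + 4) - 1) * (τ ^ (2 * μ + 2) * (v / Real.sqrt ω) - Real.sqrt (Aq τ v μ ω))

def phiFun (τ v μ : ℝ) (ω : ℝ) : ℝ :=
  ∫ t in (Ttm τ v μ ω)..(Ttp τ v μ ω), (1 - t ^ 2) ^ (1 / μ - 1)

/-- The mass of the ground state, `M(ω) = ‖u_{T̃}‖₂²`, via the explicit norm identity. -/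
def massFun (τ v μ : ℝ) (ω : ℝ) : ℝ :=
  ((μ + 1) ^ (1 / μ) / μ) * ω ^ (1 / μ - 1 / 2) *
    ((∫ t in (-1:ℝ)..1, (1 - t ^ 2) ^ (1 / μ - 1)) - phiFun τ v μ ω)


open MeasureTheory


lemma aux_key {β : ℝ} (c : ℝ) (hc2 : (2:ℝ) ^ β ≤ c) (hc1 : (1:ℝ) ≤ c) :
    ∀ x : ℝ, 1 ≤ x → x ≤ 2 → x ^ β ≤ c := by
  intro x hx hx2
  rcases le_or_gt 0 β with hb | hb
  · exact le_trans (Real.rpow_le_rpow (by linarith) hx2 hb) hc2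
  · exact le_trans (Real.rpow_le_one_of_one_le_of_nonpos hx hb.le) hc1

lemma integrable_main {β : ℝ} (hβ : -1 < β) :
    IntervalIntegrable (fun t : ℝ => (1 - t ^ 2) ^ β) volume (-1) 1 := by
  have hmeas : Measurable fun t : ℝ => (1 - t ^ 2) ^ β := by fun_prop
  set c : ℝ := max 1 (2 ^ β) with hc
  have hc1 : (1:ℝ) ≤ c := le_max_left _ _
  have hc2 : (2:ℝ) ^ β ≤ c := le_max_right _ _
  have hsplit : ∀ t : ℝ, -1 ≤ t → t ≤ 1 →
      (1 - t ^ 2 : ℝ) ^ β = (1 - t) ^ β * (1 + t) ^ β := by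
    intro t h1 h2
    rw [← Real.mul_rpow (by linarith) (by linarith)]; ring_nf
  have hg1 : IntervalIntegrable (fun t : ℝ => c * (1 - t) ^ β) volume 0 1 := by
    have h := ((intervalIntegrable_rpow' (a := 0) (b := 1) hβ).comp_sub_left 1).symm
    simpa using h.const_mul c
  have hg2 : IntervalIntegrable (fun t : ℝ => c * (1 + t) ^ β) volume (-1) 0 := by
    have h := (intervalIntegrable_rpow' (a := 0) (b := 1) hβ).comp_add_right 1
    have h' : IntervalIntegrable (fun x : ℝ => (x + 1) ^ β) volume (-1) 0 := by
      simpa using h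
    simpa [add_comm] using h'.const_mul c
  have half1 : IntervalIntegrable (fun t : ℝ => (1 - t ^ 2) ^ β) volume 0 1 := by
    apply hg1.mono_fun' (hmeas.aestronglyMeasurable.restrict)
    rw [Filter.EventuallyLE, ae_restrict_iff' measurableSet_uIoc]
    apply ae_of_all
    intro t ht
    rw [uIoc_of_le (by norm_num : (0:ℝ) ≤ 1)] at ht
    obtain ⟨ht0, ht1⟩ := ht
    have h1 : (0:ℝ) ≤ 1 - t := by linarith
    have h2 : (0:ℝ) ≤ 1 - t ^ 2 := by nlinarith
    show ‖(1 - t ^ 2) ^ β‖ ≤ c * (1 - t) ^ β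
    rw [Real.norm_eq_abs, abs_of_nonneg (Real.rpow_nonneg h2 β),
      hsplit t (by linarith) ht1]
    have hk := aux_key c hc2 hc1 (1 + t) (by linarith) (by linarith)
    calc (1 - t) ^ β * (1 + t) ^ β ≤ (1 - t) ^ β * c :=
          mul_le_mul_of_nonneg_left hk (Real.rpow_nonneg h1 β)
      _ = c * (1 - t) ^ β := mul_comm _ _
  have half2 : IntervalIntegrable (fun t : ℝ => (1 - t ^ 2) ^ β) volume (-1) 0 := by
    apply hg2.mono_fun' (hmeas.aestronglyMeasurable.restrict)
    rw [Filter.EventuallyLE, ae_restrict_iff' measurableSet_uIoc]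
    apply ae_of_all
    intro t ht
    rw [uIoc_of_le (by norm_num : (-1:ℝ) ≤ 0)] at ht
    obtain ⟨ht0, ht1⟩ := ht
    have h1 : (0:ℝ) ≤ 1 + t := by linarith
    have h2 : (0:ℝ) ≤ 1 - t ^ 2 := by nlinarith
    show ‖(1 - t ^ 2) ^ β‖ ≤ c * (1 + t) ^ β
    rw [Real.norm_eq_abs, abs_of_nonneg (Real.rpow_nonneg h2 β),
      hsplit t ht0.le (by linarith)]
    have hk := aux_key c hc2 hc1 (1 - t) (by linarith) (by linarith)
    exact mul_le_mul_of_nonneg_right hk (Real.rpow_nonneg h1 β)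
  exact half2.trans half1

lemma pow4 {τ : ℝ} (hτ : 0 < τ) (μ : ℝ) : τ ^ (2*μ+4) = τ ^ (2*μ) * (τ^2)^2 := by
  rw [Real.rpow_add hτ, show ((4:ℝ) = ((4:ℕ):ℝ)) by norm_num, Real.rpow_natCast]
  ring

lemma pow2 {τ : ℝ} (hτ : 0 < τ) (μ : ℝ) : τ ^ (2*μ+2) = τ ^ (2*μ) * τ^2 := by
  rw [Real.rpow_add hτ, show ((2:ℝ) = ((2:ℕ):ℝ)) by norm_num, Real.rpow_natCast]

lemma powW {τ : ℝ} (hτ : 0 < τ) (μ : ℝ) : τ ^ (2-2*μ) * τ ^ (2*μ) = τ^2 := by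
  rw [← Real.rpow_add hτ, show (2-2*μ+2*μ : ℝ) = ((2:ℕ):ℝ) by ring, Real.rpow_natCast]

lemma my_sign_pos {τ : ℝ} (hτ : 1 < τ) {a : ℝ} (ha : 0 < a) : 1 < τ ^ a :=
  (Real.one_lt_rpow_iff_of_pos (by linarith)).mpr (Or.inl ⟨hτ, ha⟩)

lemma my_sign_neg {τ : ℝ} (hτ0 : 0 < τ) (hτ : τ < 1) {a : ℝ} (ha : 0 < a) : τ ^ a < 1 :=
  Real.rpow_lt_one hτ0.le hτ ha
open Real

set_option maxHeartbeats 1000000 in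
lemma core_facts {τ v μ ω : ℝ} (hτ : 0 < τ) (hτ1 : τ ≠ 1) (hv : 0 < v) (hμ : 0 < μ)
    (hω : v ^ 2 / (τ ^ 2 + 1) ^ 2 < ω) :
    0 < Aq τ v μ ω ∧ 0 < 1 - (Ttm τ v μ ω)^2 ∧
      1 - (Ttp τ v μ ω)^2 = τ ^ (2*μ) * (1 - (Ttm τ v μ ω)^2) ∧
      Ttm τ v μ ω < Ttp τ v μ ω := by
  have hω0 : 0 < ω := lt_trans (by positivity) hω
  have hsw : 0 < Real.sqrt ω := Real.sqrt_pos.mpr hω0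
  set s := v / Real.sqrt ω with hs
  have hs0 : 0 < s := by positivity
  have hs2 : s ^ 2 = v ^ 2 / ω := by rw [hs, div_pow, Real.sq_sqrt hω0.le]
  have hslt : s < τ ^ 2 + 1 := by
    have h2 : Real.sqrt (v ^ 2 / (τ ^ 2 + 1) ^ 2) = v / (τ ^ 2 + 1) := by
      rw [show v ^ 2 / (τ ^ 2 + 1) ^ 2 = (v / (τ ^ 2 + 1)) ^ 2 by rw [div_pow],
        Real.sqrt_sq (by positivity)]
    have h1 : v / (τ ^ 2 + 1) < Real.sqrt ω := h2 ▸ Real.sqrt_lt_sqrt (by positivity) hω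
    rw [hs, div_lt_iff₀ hsw]
    rw [div_lt_iff₀ (by positivity : (0:ℝ) < τ ^ 2 + 1)] at h1
    linarith [h1]
  set P := τ ^ (2 * μ) with hPdef
  have hPpos : 0 < P := rpow_pos_of_pos hτ _
  have hsigns : 0 < (P - 1) * (τ ^ 2 - 1) ∧ 0 < (P * τ ^ 2 - 1) * (τ ^ 2 - 1) ∧
      0 < (P * (τ ^ 2) ^ 2 - 1) * (τ ^ 2 - 1) := by
    have e2 : P * τ ^ 2 = τ ^ (2 * μ + 2) := (pow2 hτ μ).symm
    have e4 : P * (τ ^ 2) ^ 2 = τ ^ (2 * μ + 4) := (pow4 hτ μ).symm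
    rcases hτ1.lt_or_gt with hlt | hgt
    · have h1 : P < 1 := my_sign_neg hτ hlt (by linarith)
      have h2 : P * τ ^ 2 < 1 := e2 ▸ my_sign_neg hτ hlt (by linarith)
      have h3 : P * (τ ^ 2) ^ 2 < 1 := e4 ▸ my_sign_neg hτ hlt (by linarith)
      have h4 : τ ^ 2 < 1 := pow_lt_one₀ hτ.le hlt (by norm_num)
      refine ⟨?_, ?_, ?_⟩ <;> nlinarith
    · have h1 : 1 < P := my_sign_pos hgt (by linarith)
      have h2 : 1 < P * τ ^ 2 := e2 ▸ my_sign_pos hgt (by linarith)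
      have h3 : 1 < P * (τ ^ 2) ^ 2 := e4 ▸ my_sign_pos hgt (by linarith)
      have h4 : 1 < τ ^ 2 := one_lt_pow₀ hgt (by norm_num)
      refine ⟨?_, ?_, ?_⟩ <;> nlinarith
  obtain ⟨hg1, hg2, hg3⟩ := hsigns
  set D : ℝ := P * (τ ^ 2) ^ 2 - 1 with hDdef
  have hDrw : τ ^ (2 * μ + 4) - 1 = D := by rw [hDdef, pow4 hτ μ]
  have hD2 : (0:ℝ) < D ^ 2 := by nlinarith
  have hDne : D ≠ 0 := by intro h; rw [h] at hD2; simp at hD2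
  have hA_eq : Aq τ v μ ω = s ^ 2 * P + D * (P - 1) := by
    rw [Aq, hDrw, hs2, hPdef]
  have hApos : 0 < Aq τ v μ ω := by
    rw [hA_eq]
    nlinarith [sq_nonneg (τ ^ 2 - 1), mul_pos (mul_pos hs0 hs0) hPpos]
  set q := Real.sqrt (Aq τ v μ ω) with hqdef
  have hq0 : 0 < q := Real.sqrt_pos.mpr hApos
  have hq2 : q ^ 2 = s ^ 2 * P + D * (P - 1) := by
    rw [hqdef, Real.sq_sqrt hApos.le, hA_eq]
  have hTm : Ttm τ v μ ω = 1 / D * (s - τ ^ 2 * q) := by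
    rw [Ttm, hDrw]
  have hTp : Ttp τ v μ ω = 1 / D * (P * τ ^ 2 * s - q) := by
    rw [Ttp, hDrw, pow2 hτ μ, hPdef]
  clear_value q D P s
  clear hA_eq hqdef hs hs2 hPdef hDrw
  -- main quadratic identities
  have hTm1 : D ^ 2 * (1 - (Ttm τ v μ ω) ^ 2) = D ^ 2 - (s - τ ^ 2 * q) ^ 2 := by
    rw [hTm]; field_simp
  have hTp1 : D ^ 2 * (1 - (Ttp τ v μ ω) ^ 2) = D ^ 2 - (P * τ ^ 2 * s - q) ^ 2 := by
    rw [hTp]; field_simp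
  have e1 : D ^ 2 - (s - τ ^ 2 * q) ^ 2
      = D * ((τ ^ 2) ^ 2 - 1) - (P * (τ ^ 2) ^ 2 + 1) * s ^ 2 + 2 * s * τ ^ 2 * q := by
    linear_combination (-(τ ^ 2) ^ 2) * hq2 + D * hDdef
  have hNum : 0 < D * ((τ ^ 2) ^ 2 - 1) - (P * (τ ^ 2) ^ 2 + 1) * s ^ 2 + 2 * s * τ ^ 2 * q := by
    clear hTm1 hTp1 hTm hTp e1 hω hω0 hsw hApos hDne hg1 hg3
    obtain ⟨a, hadef⟩ : ∃ a : ℝ, a = P * (τ ^ 2) ^ 2 + 1 := ⟨_, rfl⟩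
    obtain ⟨E, hEdef⟩ : ∃ E : ℝ, E = D * ((τ ^ 2) ^ 2 - 1) := ⟨_, rfl⟩
    rw [← hadef, ← hEdef]
    have ha0 : 0 < a := by rw [hadef]; positivity
    have hEa : 2 * τ ^ 2 * ((τ ^ 2 - 1) * (P * τ ^ 2 - 1))
        = E - (τ ^ 2 - 1) ^ 2 * a := by
      rw [hEdef, hadef, hDdef]; ring
    rcases le_or_gt (a * s ^ 2) E with hcase | hcase
    · have h5 : 0 < 2 * s * τ ^ 2 * q := by positivity
      nlinarith
    · have hE1 : (τ ^ 2 - 1) ^ 2 * a < E := by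
        have hp2 := mul_pos (show (0:ℝ) < 2 * τ ^ 2 by positivity) hg2
        nlinarith [hEa, hp2]
      have hs2big : (τ ^ 2 - 1) ^ 2 < s ^ 2 := by nlinarith [hE1, hcase, ha0]
      have hs2small : s ^ 2 < (τ ^ 2 + 1) ^ 2 := by nlinarith [hs0, hslt]
      have hR : (2 * s * τ ^ 2 * q) ^ 2 - (a * s ^ 2 - E) ^ 2
          = - D ^ 2 * (s ^ 2 - (τ ^ 2 + 1) ^ 2) * (s ^ 2 - (τ ^ 2 - 1) ^ 2) := by
        have hq2' : q ^ 2 = s ^ 2 * P + (P * (τ ^ 2) ^ 2 - 1) * (P - 1) := by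
          rw [hq2, hDdef]
        rw [hEdef, hadef, hDdef]
        linear_combination (4 * s ^ 2 * (τ ^ 2) ^ 2) * hq2'
      have hRpos : 0 < (2 * s * τ ^ 2 * q) ^ 2 - (a * s ^ 2 - E) ^ 2 := by
        rw [hR]
        have h1 : 0 < (τ ^ 2 + 1) ^ 2 - s ^ 2 := by linarith
        have h2 : 0 < s ^ 2 - (τ ^ 2 - 1) ^ 2 := by linarith
        have h3 := mul_pos (mul_pos hD2 h1) h2
        nlinarith [h3]
      have hY : 0 < a * s ^ 2 - E := by linarith
      have hX : 0 < 2 * s * τ ^ 2 * q := by positivity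
      have h6 : 0 < (2 * s * τ ^ 2 * q - (a * s ^ 2 - E)) * (2 * s * τ ^ 2 * q + (a * s ^ 2 - E)) := by
        have he : (2 * s * τ ^ 2 * q - (a * s ^ 2 - E)) * (2 * s * τ ^ 2 * q + (a * s ^ 2 - E))
            = (2 * s * τ ^ 2 * q) ^ 2 - (a * s ^ 2 - E) ^ 2 := by ring
        rw [he]; exact hRpos
      have h7 : 0 < 2 * s * τ ^ 2 * q + (a * s ^ 2 - E) := by linarith
      have h8 := (mul_pos_iff_of_pos_right h7).mp h6
      linarith
  have hTm2 : 0 < 1 - (Ttm τ v μ ω) ^ 2 :=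
    (mul_pos_iff_of_pos_left hD2).mp (by rw [hTm1, e1]; exact hNum)
  have hKey : 1 - (Ttp τ v μ ω) ^ 2 = P * (1 - (Ttm τ v μ ω) ^ 2) := by
    have h : D ^ 2 * (1 - (Ttp τ v μ ω) ^ 2) = D ^ 2 * (P * (1 - (Ttm τ v μ ω) ^ 2)) := by
      rw [hTp1]
      rw [show D ^ 2 * (P * (1 - Ttm τ v μ ω ^ 2)) = P * (D ^ 2 * (1 - Ttm τ v μ ω ^ 2)) by ring,
        hTm1]
      have hq2' : q ^ 2 = s ^ 2 * P + (P * (τ ^ 2) ^ 2 - 1) * (P - 1) := by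
        rw [hq2, hDdef]
      rw [hDdef]
      linear_combination (P * (τ ^ 2) ^ 2 - 1) * hq2'
    exact mul_left_cancel₀ (by positivity) h
  have hTmTp : Ttm τ v μ ω < Ttp τ v μ ω := by
    have hdiff : Ttp τ v μ ω - Ttm τ v μ ω = (s * (P * τ ^ 2 - 1) + q * (τ ^ 2 - 1)) / D := by
      rw [hTm, hTp]; field_simp; ring
    have hpos : 0 < (s * (P * τ ^ 2 - 1) + q * (τ ^ 2 - 1)) / D := by
      rcases lt_trichotomy (τ ^ 2 - 1) 0 with hlt | heq | hgt
      · have h2 : P * τ ^ 2 - 1 < 0 := by nlinarith [hg2]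
        have hDneg : D < 0 := by nlinarith [hg3]
        apply div_pos_of_neg_of_neg _ hDneg
        nlinarith [mul_pos hs0 hq0, mul_neg_of_pos_of_neg hs0 h2,
          mul_neg_of_pos_of_neg hq0 hlt]
      · rw [heq] at hg1; simp at hg1
      · have h2 : 0 < P * τ ^ 2 - 1 := by nlinarith [hg2]
        have hDpos : 0 < D := by nlinarith [hg3]
        apply div_pos _ hDpos
        nlinarith [mul_pos hs0 h2, mul_pos hq0 hgt]
    linarith [hdiff ▸ hpos]
  exact ⟨hApos, hTm2, hKey, hTmTp⟩

lemma f_contOn {μ : ℝ} : ContinuousOn (fun t : ℝ => (1 - t ^ 2) ^ (1/μ - 1)) (Ioo (-1:ℝ) 1) := by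
  apply ContinuousOn.rpow_const
  · exact (continuous_const.sub (continuous_pow 2)).continuousOn
  · intro t ht
    left
    obtain ⟨h1, h2⟩ := ht
    nlinarith

lemma F_hasDeriv {μ : ℝ} {x : ℝ} (hx : x ∈ Ioo (-1:ℝ) 1) :
    HasDerivAt (fun u => ∫ t in (0:ℝ)..u, (1 - t ^ 2) ^ (1/μ - 1))
      ((1 - x ^ 2) ^ (1/μ - 1)) x := by
  apply intervalIntegral.integral_hasDerivAt_right
  · exact (f_contOn.mono (Set.ordConnected_Ioo.uIcc_subset (by norm_num) hx)).intervalIntegrable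
  · exact f_contOn.stronglyMeasurableAtFilter isOpen_Ioo x hx
  · exact f_contOn.continuousAt (isOpen_Ioo.mem_nhds hx)

lemma mem_Ioo_of_sq {x : ℝ} (h : 0 < 1 - x ^ 2) : x ∈ Ioo (-1:ℝ) 1 := by
  constructor <;> nlinarith

lemma phi_rep {τ v μ ω : ℝ} (hτ : 0 < τ) (hτ1 : τ ≠ 1) (hv : 0 < v) (hμ : 0 < μ)
    (hω : v ^ 2 / (τ ^ 2 + 1) ^ 2 < ω) :
    phiFun τ v μ ω = (∫ t in (0:ℝ)..(Ttp τ v μ ω), (1 - t ^ 2) ^ (1/μ - 1))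
      - ∫ t in (0:ℝ)..(Ttm τ v μ ω), (1 - t ^ 2) ^ (1/μ - 1) := by
  obtain ⟨-, hTm2, hKey, -⟩ := core_facts hτ hτ1 hv hμ hω
  have hTp2 : 0 < 1 - (Ttp τ v μ ω) ^ 2 := by
    rw [hKey]; exact mul_pos (rpow_pos_of_pos hτ _) hTm2
  have hTmI := mem_Ioo_of_sq hTm2
  have hTpI := mem_Ioo_of_sq hTp2
  have h0 : (0:ℝ) ∈ Ioo (-1:ℝ) 1 := by norm_num
  have i1 : IntervalIntegrable (fun t : ℝ => (1 - t ^ 2) ^ (1/μ - 1)) volume (Ttm τ v μ ω) 0 :=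
    (f_contOn.mono (Set.ordConnected_Ioo.uIcc_subset hTmI h0)).intervalIntegrable
  have i2 : IntervalIntegrable (fun t : ℝ => (1 - t ^ 2) ^ (1/μ - 1)) volume 0 (Ttp τ v μ ω) :=
    (f_contOn.mono (Set.ordConnected_Ioo.uIcc_subset h0 hTpI)).intervalIntegrable
  have := intervalIntegral.integral_add_adjacent_intervals i1 i2
  rw [phiFun, ← this, intervalIntegral.integral_symm]
  ring

lemma alg_key {τ v P r q DD W : ℝ} (hτ : 0 < τ) (hv : 0 < v) (hr0 : 0 < r) (hq0 : 0 < q)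
    (hP0 : 0 < P) (hWP : W * P = τ ^ 2)
    (hsgn1 : 0 < (P - 1) * (τ ^ 2 - 1)) (hsgn4 : 0 < DD * (τ ^ 2 - 1)) :
    W * (1 / DD * (P * τ ^ 2 * ((0 * r - v * (1 / (2 * r))) / r ^ 2)
        - 1 / (2 * q) * ((0 * r ^ 2 - v ^ 2 * 1) / (r ^ 2) ^ 2 * P)))
      - 1 / DD * ((0 * r - v * (1 / (2 * r))) / r ^ 2
        - τ ^ 2 * (1 / (2 * q) * ((0 * r ^ 2 - v ^ 2 * 1) / (r ^ 2) ^ 2 * P))) < 0 := by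
  have hτ2 : (0:ℝ) < τ ^ 2 - 1 ∨ τ ^ 2 - 1 < 0 := by
    rcases lt_trichotomy (τ ^ 2 - 1 : ℝ) 0 with h | h | h
    · exact Or.inr h
    · rw [h] at hsgn1; simp at hsgn1
    · exact Or.inl h
  have hDDne : DD ≠ 0 := by
    rintro rfl; simp at hsgn4
  have hW : W = τ ^ 2 / P := by
    field_simp [hP0.ne']
    linarith [hWP]
  have hRpos : 0 < (((τ ^ 2) ^ 2 - 1) * q + (v / r) * τ ^ 2 * (P - 1)) / (q * DD) := by
    have hvr : 0 < v / r := div_pos hv hr0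
    rcases hτ2 with h | h
    · have hP1 : 0 < P - 1 := by nlinarith
      have hDD : 0 < DD := by nlinarith
      apply div_pos _ (mul_pos hq0 hDD)
      have h41 : 0 < (τ ^ 2) ^ 2 - 1 := by nlinarith
      nlinarith [mul_pos h41 hq0, mul_pos (mul_pos hvr (pow_pos hτ 2)) hP1]
    · have hP1 : P - 1 < 0 := by nlinarith
      have hDD : DD < 0 := by nlinarith
      apply div_pos_of_neg_of_neg _ (mul_neg_of_pos_of_neg hq0 hDD)
      have h41 : (τ ^ 2) ^ 2 - 1 < 0 := by nlinarith
      nlinarith [mul_neg_of_neg_of_pos h41 hq0,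
        mul_neg_of_pos_of_neg (mul_pos hvr (pow_pos hτ 2)) hP1]
  have hfin : (-(v / (2 * r ^ 3))) *
      ((((τ ^ 2) ^ 2 - 1) * q + (v / r) * τ ^ 2 * (P - 1)) / (q * DD)) < 0 := by
    apply mul_neg_of_neg_of_pos _ hRpos
    have : 0 < v / (2 * r ^ 3) := by positivity
    linarith
  refine lt_of_eq_of_lt ?_ hfin
  rw [hW]
  field_simp
  ring

set_option maxHeartbeats 1000000 in
lemma phi_hasDeriv_neg {τ v μ ω : ℝ} (hτ : 0 < τ) (hτ1 : τ ≠ 1) (hv : 0 < v) (hμ : 0 < μ)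
    (hω : v ^ 2 / (τ ^ 2 + 1) ^ 2 < ω) :
    ∃ d : ℝ, HasDerivAt (phiFun τ v μ) d ω ∧ d < 0 := by
  obtain ⟨hApos, hTm2, hKey, -⟩ := core_facts hτ hτ1 hv hμ hω
  have hω0 : 0 < ω := lt_trans (by positivity) hω
  have hsw : 0 < Real.sqrt ω := Real.sqrt_pos.mpr hω0
  have hPpos : (0:ℝ) < τ ^ (2 * μ) := rpow_pos_of_pos hτ _
  have hTp2 : 0 < 1 - (Ttp τ v μ ω) ^ 2 := by
    rw [hKey]; exact mul_pos hPpos hTm2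
  -- derivatives of the endpoint functions
  have hsd : HasDerivAt (fun x => v / Real.sqrt x)
      ((0 * Real.sqrt ω - v * (1 / (2 * Real.sqrt ω))) / Real.sqrt ω ^ 2) ω :=
    (hasDerivAt_const ω v).div (Real.hasDerivAt_sqrt hω0.ne') hsw.ne'
  have hAd : HasDerivAt (fun x => Aq τ v μ x)
      ((0 * ω - v ^ 2 * 1) / ω ^ 2 * τ ^ (2 * μ)) ω := by
    have h1 : HasDerivAt (fun x : ℝ => v ^ 2 / x) ((0 * ω - v ^ 2 * 1) / ω ^ 2) ω :=
      (hasDerivAt_const ω (v ^ 2)).div (hasDerivAt_id ω) hω0.ne'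
    exact (h1.mul_const (τ ^ (2 * μ))).add_const ((τ ^ (2 * μ + 4) - 1) * (τ ^ (2 * μ) - 1))
  have hqd : HasDerivAt (fun x => Real.sqrt (Aq τ v μ x))
      (1 / (2 * Real.sqrt (Aq τ v μ ω)) * ((0 * ω - v ^ 2 * 1) / ω ^ 2 * τ ^ (2 * μ))) ω :=
    (Real.hasDerivAt_sqrt hApos.ne').comp ω hAd
  have hTmd : HasDerivAt (fun x => Ttm τ v μ x)
      (1 / (τ ^ (2 * μ + 4) - 1) *
        ((0 * Real.sqrt ω - v * (1 / (2 * Real.sqrt ω))) / Real.sqrt ω ^ 2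
          - τ ^ 2 * (1 / (2 * Real.sqrt (Aq τ v μ ω))
              * ((0 * ω - v ^ 2 * 1) / ω ^ 2 * τ ^ (2 * μ))))) ω := by
    have h := (hsd.sub (hqd.const_mul (τ ^ 2 : ℝ))).const_mul (1 / (τ ^ (2 * μ + 4) - 1))
    simpa [Ttm] using h
  have hTpd : HasDerivAt (fun x => Ttp τ v μ x)
      (1 / (τ ^ (2 * μ + 4) - 1) *
        (τ ^ (2 * μ + 2) * ((0 * Real.sqrt ω - v * (1 / (2 * Real.sqrt ω))) / Real.sqrt ω ^ 2)
          - 1 / (2 * Real.sqrt (Aq τ v μ ω)) * ((0 * ω - v ^ 2 * 1) / ω ^ 2 * τ ^ (2 * μ)))) ω := by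
    have h := ((hsd.const_mul (τ ^ (2 * μ + 2))).sub hqd).const_mul (1 / (τ ^ (2 * μ + 4) - 1))
    simpa [Ttp] using h
  have hTmI := mem_Ioo_of_sq hTm2
  have hTpI := mem_Ioo_of_sq hTp2
  have hd0 : HasDerivAt
      (fun x => (∫ t in (0:ℝ)..(Ttp τ v μ x), (1 - t ^ 2) ^ (1/μ - 1))
        - ∫ t in (0:ℝ)..(Ttm τ v μ x), (1 - t ^ 2) ^ (1/μ - 1))
      ((1 - (Ttp τ v μ ω) ^ 2) ^ (1/μ - 1) *
        (1 / (τ ^ (2 * μ + 4) - 1) *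
          (τ ^ (2 * μ + 2) * ((0 * Real.sqrt ω - v * (1 / (2 * Real.sqrt ω))) / Real.sqrt ω ^ 2)
            - 1 / (2 * Real.sqrt (Aq τ v μ ω)) * ((0 * ω - v ^ 2 * 1) / ω ^ 2 * τ ^ (2 * μ))))
        - (1 - (Ttm τ v μ ω) ^ 2) ^ (1/μ - 1) *
          (1 / (τ ^ (2 * μ + 4) - 1) *
            ((0 * Real.sqrt ω - v * (1 / (2 * Real.sqrt ω))) / Real.sqrt ω ^ 2
              - τ ^ 2 * (1 / (2 * Real.sqrt (Aq τ v μ ω))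
                  * ((0 * ω - v ^ 2 * 1) / ω ^ 2 * τ ^ (2 * μ)))))) ω :=
    ((F_hasDeriv hTpI).comp ω hTpd).sub ((F_hasDeriv hTmI).comp ω hTmd)
  have hEV : phiFun τ v μ =ᶠ[nhds ω]
      (fun x => (∫ t in (0:ℝ)..(Ttp τ v μ x), (1 - t ^ 2) ^ (1/μ - 1))
        - ∫ t in (0:ℝ)..(Ttm τ v μ x), (1 - t ^ 2) ^ (1/μ - 1)) := by
    filter_upwards [isOpen_Ioi.mem_nhds (show ω ∈ Ioi (v ^ 2 / (τ ^ 2 + 1) ^ 2) from hω)] with x hx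
    exact phi_rep hτ hτ1 hv hμ hx
  refine ⟨_, hd0.congr_of_eventuallyEq hEV, ?_⟩
  -- now the sign
  have hfTp : (1 - (Ttp τ v μ ω) ^ 2) ^ (1/μ - 1)
      = τ ^ (2 - 2 * μ) * (1 - (Ttm τ v μ ω) ^ 2) ^ (1/μ - 1) := by
    rw [hKey, Real.mul_rpow hPpos.le hTm2.le, ← Real.rpow_mul hτ.le,
      show (2 * μ) * (1/μ - 1) = 2 - 2 * μ by field_simp]
  rw [hfTp]
  have hfm : 0 < (1 - (Ttm τ v μ ω) ^ 2) ^ (1/μ - 1) := Real.rpow_pos_of_pos hTm2 _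
  -- sign lemmas
  have hsgn1 : 0 < (τ ^ (2 * μ) - 1) * (τ ^ 2 - 1) := by
    rcases hτ1.lt_or_gt with hlt | hgt
    · have h1 : τ ^ (2 * μ) < 1 := my_sign_neg hτ hlt (by linarith)
      have h4 : τ ^ 2 < 1 := pow_lt_one₀ hτ.le hlt (by norm_num)
      nlinarith
    · have h1 : 1 < τ ^ (2 * μ) := my_sign_pos hgt (by linarith)
      have h4 : 1 < τ ^ 2 := one_lt_pow₀ hgt (by norm_num)
      nlinarith
  have hsgn4 : 0 < (τ ^ (2 * μ) * (τ ^ 2) ^ 2 - 1) * (τ ^ 2 - 1) := by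
    have e4 : τ ^ (2 * μ) * (τ ^ 2) ^ 2 = τ ^ (2 * μ + 4) := (pow4 hτ μ).symm
    rcases hτ1.lt_or_gt with hlt | hgt
    · have h1 : τ ^ (2 * μ) * (τ ^ 2) ^ 2 < 1 := e4 ▸ my_sign_neg hτ hlt (by linarith)
      have h4 : τ ^ 2 < 1 := pow_lt_one₀ hτ.le hlt (by norm_num)
      nlinarith
    · have h1 : 1 < τ ^ (2 * μ) * (τ ^ 2) ^ 2 := e4 ▸ my_sign_pos hgt (by linarith)
      have h4 : 1 < τ ^ 2 := one_lt_pow₀ hgt (by norm_num)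
      nlinarith
  have hq0 : 0 < Real.sqrt (Aq τ v μ ω) := Real.sqrt_pos.mpr hApos
  have halg : τ ^ (2 - 2 * μ) *
        (1 / (τ ^ (2 * μ + 4) - 1) *
          (τ ^ (2 * μ + 2) * ((0 * Real.sqrt ω - v * (1 / (2 * Real.sqrt ω))) / Real.sqrt ω ^ 2)
            - 1 / (2 * Real.sqrt (Aq τ v μ ω)) * ((0 * ω - v ^ 2 * 1) / ω ^ 2 * τ ^ (2 * μ))))
      - 1 / (τ ^ (2 * μ + 4) - 1) *
          ((0 * Real.sqrt ω - v * (1 / (2 * Real.sqrt ω))) / Real.sqrt ω ^ 2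
            - τ ^ 2 * (1 / (2 * Real.sqrt (Aq τ v μ ω))
                * ((0 * ω - v ^ 2 * 1) / ω ^ 2 * τ ^ (2 * μ)))) < 0 := by
    rw [pow2 hτ μ, pow4 hτ μ]
    set q := Real.sqrt (Aq τ v μ ω) with hqdef
    set r := Real.sqrt ω with hrdef
    rw [show ω = r ^ 2 from (Real.sq_sqrt hω0.le).symm]
    exact alg_key hτ hv hsw hq0 hPpos (powW hτ μ) hsgn1 hsgn4
  linarith [mul_neg_of_pos_of_neg hfm halg]

lemma phi_le_C {τ v μ ω : ℝ} (hτ : 0 < τ) (hτ1 : τ ≠ 1) (hv : 0 < v) (hμ : 0 < μ)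
    (hω : v ^ 2 / (τ ^ 2 + 1) ^ 2 < ω) :
    phiFun τ v μ ω ≤ ∫ t in (-1:ℝ)..1, (1 - t ^ 2) ^ (1/μ - 1) := by
  obtain ⟨hApos, hTm2, hKey, hTmTp⟩ := core_facts hτ hτ1 hv hμ hω
  have hTp2 : 0 < 1 - (Ttp τ v μ ω) ^ 2 := by
    rw [hKey]; exact mul_pos (rpow_pos_of_pos hτ _) hTm2
  obtain ⟨hTm1, hTm1'⟩ := mem_Ioo_of_sq hTm2
  obtain ⟨hTp1, hTp1'⟩ := mem_Ioo_of_sq hTp2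
  have hβ : (-1:ℝ) < 1/μ - 1 := by
    have : 0 < 1/μ := by positivity
    linarith
  have hint := integrable_main hβ
  have hmem : ∀ x : ℝ, -1 ≤ x → x ≤ 1 → x ∈ Set.uIcc (-1:ℝ) 1 := by
    intro x h1 h2
    rw [Set.uIcc_of_le (by norm_num)]
    exact ⟨h1, h2⟩
  have i1 : IntervalIntegrable (fun t : ℝ => (1 - t ^ 2) ^ (1/μ - 1)) volume (-1) (Ttm τ v μ ω) :=
    hint.mono_set (Set.uIcc_subset_uIcc (hmem _ le_rfl (by norm_num))
      (hmem _ hTm1.le hTm1'.le))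
  have i2 : IntervalIntegrable (fun t : ℝ => (1 - t ^ 2) ^ (1/μ - 1)) volume (Ttm τ v μ ω) (Ttp τ v μ ω) :=
    hint.mono_set (Set.uIcc_subset_uIcc (hmem _ hTm1.le hTm1'.le)
      (hmem _ hTp1.le hTp1'.le))
  have i3 : IntervalIntegrable (fun t : ℝ => (1 - t ^ 2) ^ (1/μ - 1)) volume (Ttp τ v μ ω) 1 :=
    hint.mono_set (Set.uIcc_subset_uIcc (hmem _ hTp1.le hTp1'.le)
      (hmem _ (by norm_num) le_rfl))
  have e1 := intervalIntegral.integral_add_adjacent_intervals i1 i2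
  have e2 := intervalIntegral.integral_add_adjacent_intervals (i1.trans i2) i3
  have nonneg : ∀ (a b : ℝ), -1 ≤ a → b ≤ 1 → a ≤ b →
      0 ≤ ∫ t in a..b, (1 - t ^ 2) ^ (1/μ - 1) := by
    intro a b ha hb hab
    apply intervalIntegral.integral_nonneg hab
    intro u hu
    apply Real.rpow_nonneg
    obtain ⟨h1, h2⟩ := hu
    nlinarith
  have n1 : 0 ≤ ∫ t in (-1:ℝ)..(Ttm τ v μ ω), (1 - t ^ 2) ^ (1/μ - 1) :=
    nonneg _ _ le_rfl hTm1'.le hTm1.le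
  have n3 : 0 ≤ ∫ t in (Ttp τ v μ ω)..(1:ℝ), (1 - t ^ 2) ^ (1/μ - 1) :=
    nonneg _ _ hTp1.le le_rfl hTp1'.le
  rw [phiFun]
  linarith [e1, e2, n1, n3]

/-- Grillakis–Shatah–Strauss slope condition: for `μ ∈ (0,2]` the mass of the
ground state is non-decreasing in `ω` on `(v²/(τ²+1)², ∞)`, and strictly increasing if `μ < 2`. -/
theorem mass_monotone
    (τ v μ : ℝ) (hτ : 0 < τ) (hτ1 : τ ≠ 1) (hv : 0 < v) (hμ : 0 < μ) (hμ2 : μ ≤ 2) :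
    MonotoneOn (massFun τ v μ) (Ioi (v ^ 2 / (τ ^ 2 + 1) ^ 2)) ∧
    (μ < 2 → StrictMonoOn (massFun τ v μ) (Ioi (v ^ 2 / (τ ^ 2 + 1) ^ 2))) := by
  set S := Ioi (v ^ 2 / (τ ^ 2 + 1) ^ 2) with hSdef
  set C : ℝ := ∫ t in (-1:ℝ)..1, (1 - t ^ 2) ^ (1 / μ - 1) with hCdef
  set g : ℝ → ℝ := fun x => C - phiFun τ v μ x with hgdef
  have hgderiv : ∀ x ∈ S, ∃ d : ℝ, HasDerivAt g d x ∧ 0 < d := by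
    intro x hx
    obtain ⟨d, hd, hdneg⟩ := phi_hasDeriv_neg hτ hτ1 hv hμ hx
    exact ⟨0 - d, (hasDerivAt_const x C).sub hd, by linarith⟩
  have hgmono : StrictMonoOn g S := by
    apply strictMonoOn_of_deriv_pos (convex_Ioi _)
    · intro x hx
      obtain ⟨d, hd, -⟩ := hgderiv x hx
      exact hd.continuousAt.continuousWithinAt
    · intro x hx
      rw [interior_Ioi] at hx
      obtain ⟨d, hd, hdpos⟩ := hgderiv x hx
      rw [hd.deriv]
      exact hdpos
  have hg0 : ∀ x ∈ S, 0 ≤ g x := by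
    intro x hx
    have := phi_le_C hτ hτ1 hv hμ hx
    rw [hgdef]
    dsimp only
    rw [hCdef]
    linarith
  have he0 : (0:ℝ) ≤ 1 / μ - 1 / 2 := by
    have h := one_div_le_one_div_of_le hμ hμ2
    linarith
  have hc0 : (0:ℝ) < (μ + 1) ^ (1 / μ) / μ :=
    div_pos (Real.rpow_pos_of_pos (by linarith) _) hμ
  have hM : ∀ x : ℝ, massFun τ v μ x = ((μ + 1) ^ (1 / μ) / μ * x ^ (1 / μ - 1 / 2)) * g x := by
    intro x
    rw [massFun, hgdef]
  have hstrict : StrictMonoOn (massFun τ v μ) S := by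
    intro a ha b hb hab
    have ha0 : 0 < a := lt_trans (by positivity) ha
    have hb0 : 0 < b := lt_trans (by positivity) hb
    have hae : a ^ (1 / μ - 1 / 2) ≤ b ^ (1 / μ - 1 / 2) :=
      Real.rpow_le_rpow ha0.le hab.le he0
    have hbpow : 0 < b ^ (1 / μ - 1 / 2) := Real.rpow_pos_of_pos hb0 _
    rw [hM a, hM b]
    calc ((μ + 1) ^ (1 / μ) / μ * a ^ (1 / μ - 1 / 2)) * g a
        ≤ ((μ + 1) ^ (1 / μ) / μ * b ^ (1 / μ - 1 / 2)) * g a := by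
          apply mul_le_mul_of_nonneg_right _ (hg0 a ha)
          exact mul_le_mul_of_nonneg_left hae hc0.le
      _ < ((μ + 1) ^ (1 / μ) / μ * b ^ (1 / μ - 1 / 2)) * g b := by
          apply mul_lt_mul_of_pos_left (hgmono ha hb hab)
          exact mul_pos hc0 hbpow
  exact ⟨hstrict.monotoneOn, fun _ => hstrict⟩
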